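/- Let (Ω, F, P) be a complete probability space and A ⊆ Ω × ℝ+ a subset measurable with respect to F ⊗ B(ℝ+). Define the debut D_A(ω) := inf{ t ≥ 0 : (ω, t) ∈ A } (with inf ∅ = ∞). Then: (i) { ω : D_A(ω) < ∞ } = π_Ω(A) and D_A is an F-measurable random variable with values in [0, ∞]; (ii) if moreover (F_t)_{t≥0} is a filtration on Ω satisfying the usual conditions (F_0 contains all P-null sets and the filtration is right continuous) and A is progressively measurable (i.e. A ∩ (Ω × [0, t]) ∈ F_t ⊗ B([0, t]) for every t ≥ 0), then D_A is a stopping time: { D_A ≤ t } ∈ F_t for every t. -/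

import Mathlib

/-!
A set in `F ⊗ B(Y)` involves only countably many sets `B n ∈ F`, so it is the preimage of a
Borel subset of `(ℕ → Bool) × Y` under `(ω, y) ↦ ((𝟙_{B n} ω)ₙ, y)`. Its projection is then the
preimage of an analytic subset of the Cantor space, and analytic sets are null measurable for
every finite Borel measure: `g(ℕ^ℕ)` is approximated from inside by the compact sets
`g {σ | σ ≤ m}`, choosing the bound `m` one coordinate at a time. Hence projections of
product-measurable sets are measurable for complete measures.

The event `{D_A < c}` is the projection of `A ∩ {t < c}`, which gives (i). For (ii), the usual
conditions make the trimmed measure on `F_u` complete, progressive measurability puts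
`A ∩ {t < c}` in `F_u ⊗ B` for `c ≤ u`, and right continuity turns the events `{D_A < c}` for
`c ↓ t` into `{D_A ≤ t} ∈ F_t`.
-/

open MeasureTheory
open scoped ENNReal NNReal

/-- The debut of a subset `A` of `Ω × ℝ⁺`: `D_A(ω) = inf { t ≥ 0 : (ω,t) ∈ A }`,
with values in `[0,∞]` and the convention `inf ∅ = ∞`. -/
noncomputable def debut {Ω : Type*} (A : Set (Ω × ℝ≥0)) (ω : Ω) : ℝ≥0∞ :=
  ⨅ (t : ℝ≥0) (_ : (ω, t) ∈ A), (t : ℝ≥0∞)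

open Set Filter Topology

namespace MeasurableSpace

theorem exists_seq_of_measurableSet_generateFrom {α : Type*} {C : Set (Set α)}
    (hC : C.Nonempty) {s : Set α} (hs : MeasurableSet[generateFrom C] s) :
    ∃ e : ℕ → Set α, (∀ n, e n ∈ C) ∧ MeasurableSet[generateFrom (range e)] s := by
  induction hs with
  | basic t ht => exact ⟨fun _ => t, fun _ => ht, measurableSet_generateFrom ⟨0, rfl⟩⟩
  | empty => exact ⟨fun _ => hC.some, fun _ => hC.some_mem, measurableSet_empty _⟩
  | compl t _ ih =>
    obtain ⟨e, he, ht⟩ := ih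
    exact ⟨e, he, ht.compl⟩
  | iUnion f _ ih =>
    choose e he hf using ih
    refine ⟨fun n => e n.unpair.1 n.unpair.2, fun n => he _ _, .iUnion fun i => ?_⟩
    refine generateFrom_mono ?_ _ (hf i)
    rintro _ ⟨n, rfl⟩
    exact ⟨Nat.pair i n, by simp⟩

end MeasurableSpace

theorem isCompact_setOf_forall_le (m : ℕ → ℕ) : IsCompact {σ : ℕ → ℕ | ∀ k, σ k ≤ m k} := by
  simpa [Set.pi] using isCompact_univ_pi fun k => (Set.finite_Iic (m k)).isCompact

theorem exists_setOf_forall_lt_le_subset_of_isOpen {m : ℕ → ℕ} {W : Set (ℕ → ℕ)}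
    (hW : IsOpen W) (hmW : {σ | ∀ k, σ k ≤ m k} ⊆ W) :
    ∃ n, {σ : ℕ → ℕ | ∀ k < n, σ k ≤ m k} ⊆ W := by
  have hcyl : ∀ σ ∈ W, ∃ j, PiNat.cylinder σ j ⊆ W := by
    intro σ hσ
    obtain ⟨_, ⟨x, j, rfl⟩, hσx, hxW⟩ :=
      (PiNat.isTopologicalBasis_cylinders _).exists_subset_of_mem_open hσ hW
    exact ⟨j, PiNat.mem_cylinder_iff_eq.1 hσx ▸ hxW⟩
  choose! j hj using hcyl
  obtain ⟨t, htW, hcover⟩ := (isCompact_setOf_forall_le m).elim_nhds_subcover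
    (fun σ => PiNat.cylinder σ (j σ)) fun σ _ =>
      (PiNat.isOpen_cylinder _ σ _).mem_nhds (PiNat.self_mem_cylinder σ _)
  refine ⟨t.sup j, fun τ hτ => ?_⟩
  -- clamping `τ` into the box does not change its first `t.sup j` coordinates
  obtain ⟨σ, hσt, hσ⟩ := mem_iUnion₂.1 (hcover (show (fun k => min (τ k) (m k)) ∈ _ from
    fun k => min_le_right _ _))
  refine hj σ (hmW (htW σ hσt)) (PiNat.mem_cylinder_iff.2 fun i hi => ?_)
  have hi' : i < t.sup j := lt_of_lt_of_le hi (Finset.le_sup hσt)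
  rw [← PiNat.mem_cylinder_iff.1 hσ i hi, min_eq_left (hτ i hi')]

namespace MeasureTheory

variable {X : Type*} [MeasurableSpace X] (μ : Measure X) [IsFiniteMeasure μ]

theorem exists_measure_image_le_inter_add (g : (ℕ → ℕ) → X) (T : Set (ℕ → ℕ)) (n : ℕ)
    {δ : ℝ≥0∞} (hδ : δ ≠ 0) : ∃ v, μ (g '' T) ≤ μ (g '' (T ∩ {σ | σ n ≤ v})) + δ := by
  have hmono : Monotone fun v => g '' (T ∩ {σ | σ n ≤ v}) :=
    fun v w hvw => image_mono <| inter_subset_inter_right _ fun σ hσ => hσ.trans hvw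
  have hunion : g '' T = ⋃ v, g '' (T ∩ {σ | σ n ≤ v}) := by
    rw [← image_iUnion, ← inter_iUnion, iUnion_eq_univ_iff.2 fun σ => ⟨σ n, le_refl (σ n)⟩,
      inter_univ]
  have hlt : μ (g '' T) < μ (g '' T) + δ := ENNReal.lt_add_right (measure_ne_top _ _) hδ
  conv_rhs at hlt => rw [hunion, hmono.measure_iUnion, ENNReal.iSup_add]
  obtain ⟨v, hv⟩ := lt_iSup_iff.1 hlt
  exact ⟨v, hv.le⟩

variable [TopologicalSpace X] [TopologicalSpace.MetrizableSpace X] [BorelSpace X]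

theorem exists_isCompact_subset_range_measure_le_add {g : (ℕ → ℕ) → X} (hg : Continuous g)
    {ε : ℝ≥0∞} (hε : ε ≠ 0) : ∃ K ⊆ range g, IsCompact K ∧ μ (range g) ≤ μ K + ε := by
  obtain ⟨δ, hδ, hδε⟩ := ENNReal.exists_pos_sum_of_countable' hε ℕ
  choose v hv using fun n T => exists_measure_image_le_inter_add μ g T n (hδ n).ne'
  let T : ℕ → Set (ℕ → ℕ) := fun n => Nat.rec univ (fun k Tk => Tk ∩ {σ | σ k ≤ v k Tk}) n
  let m : ℕ → ℕ := fun k => v k (T k)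
  have hT : ∀ n, T n = {σ | ∀ k < n, σ k ≤ m k} := by
    intro n
    induction n with
    | zero => simp [T]
    | succ n ih =>
      show T n ∩ {σ | σ n ≤ m n} = _
      ext σ
      simp only [ih, mem_inter_iff, mem_ofPred_eq, Nat.lt_add_one_iff_lt_or_eq, or_imp,
        forall_and, forall_eq]
  have hμT : ∀ n, μ (range g) ≤ μ (g '' T n) + ∑ k ∈ Finset.range n, δ k := by
    intro n
    induction n with
    | zero => simp [T]
    | succ n ih =>
      calc μ (range g) ≤ μ (g '' T n) + ∑ k ∈ Finset.range n, δ k := ih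
        _ ≤ μ (g '' T (n + 1)) + δ n + ∑ k ∈ Finset.range n, δ k := by gcongr; exact hv n (T n)
        _ = μ (g '' T (n + 1)) + ∑ k ∈ Finset.range (n + 1), δ k := by
          rw [Finset.sum_range_succ]; ring
  refine ⟨g '' {σ | ∀ k, σ k ≤ m k}, image_subset_range _ _,
    (isCompact_setOf_forall_le m).image hg, ?_⟩
  -- outer regularity: bound `μ U` for open `U ⊇ K`; then `g⁻¹' U ⊇ T n` for some `n`
  refine ENNReal.le_of_forall_pos_le_add fun η hη _ => ?_
  obtain ⟨U, hKU, hU, hμU⟩ := Set.exists_isOpen_le_add (g '' {σ | ∀ k, σ k ≤ m k}) μ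
    (ENNReal.coe_ne_zero.2 hη.ne')
  obtain ⟨n, hn⟩ :=
    exists_setOf_forall_lt_le_subset_of_isOpen (hU.preimage hg) (image_subset_iff.1 hKU)
  calc μ (range g) ≤ μ (g '' T n) + ∑ k ∈ Finset.range n, δ k := hμT n
    _ ≤ μ U + ε := by
      gcongr
      · exact image_subset_iff.2 (hT n ▸ hn)
      · exact (ENNReal.sum_le_tsum _).trans hδε.le
    _ ≤ _ := by rw [add_right_comm]; gcongr

theorem AnalyticSet.nullMeasurableSet {S : Set X} (hS : AnalyticSet S) :
    NullMeasurableSet S μ := by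
  rw [AnalyticSet] at hS
  obtain rfl | ⟨g, hg, rfl⟩ := hS
  · exact .empty
  choose K hKg hK hμK using fun n : ℕ => exists_isCompact_subset_range_measure_le_add μ hg
    (ENNReal.inv_ne_zero.2 (ENNReal.natCast_ne_top n))
  have hmeas : MeasurableSet (⋃ n, K n) := .iUnion fun n => (hK n).measurableSet
  have hle : ∀ n : ℕ, μ (range g \ ⋃ n, K n) ≤ (n : ℝ≥0∞)⁻¹ := fun n =>
    ENNReal.le_of_add_le_add_left (measure_ne_top μ (K n)) <| calc
      μ (K n) + μ (range g \ ⋃ n, K n)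
        ≤ μ (range g ∩ ⋃ n, K n) + μ (range g \ ⋃ n, K n) := by
          gcongr
          exact subset_inter (hKg n) (subset_iUnion K n)
      _ = μ (range g) := measure_inter_add_sdiff _ hmeas
      _ ≤ μ (K n) + (n : ℝ≥0∞)⁻¹ := hμK n
  have hnull : μ (range g \ ⋃ n, K n) = 0 := by
    by_contra h
    obtain ⟨n, hn⟩ := ENNReal.exists_inv_nat_lt h
    exact (hn.trans_le (hle n)).false
  refine hmeas.nullMeasurableSet.congr (ae_eq_set.2 ⟨?_, hnull⟩)
  rw [sdiff_eq_empty.2 (iUnion_subset hKg), measure_empty]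

theorem Measure.isComplete_trim {Ω : Type*} {m m0 : MeasurableSpace Ω} {μ : Measure[m0] Ω}
    (hm : m ≤ m0) (h : ∀ s, μ s = 0 → MeasurableSet[m] s) : (μ.trim hm).IsComplete :=
  ⟨fun s hs => h s (nonpos_iff_eq_zero.1 (hs ▸ le_trim hm))⟩

end MeasureTheory

theorem fst_image_preimage_prodMap_id {α β γ : Type*} (f : α → β) (s : Set (β × γ)) :
    Prod.fst '' (Prod.map f id ⁻¹' s) = f ⁻¹' (Prod.fst '' s) := by
  ext; simp

theorem MeasurableSet.nullMeasurableSet_fst_image {Ω Y : Type*} {mΩ : MeasurableSpace Ω}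
    [MeasurableSpace Y] [StandardBorelSpace Y] {A : Set (Ω × Y)} (hA : MeasurableSet A)
    (P : Measure Ω) [IsFiniteMeasure P] : NullMeasurableSet (Prod.fst '' A) P := by
  classical
  obtain ⟨e, he, hAe⟩ := MeasurableSpace.exists_seq_of_measurableSet_generateFrom
    (.image2 ⟨∅, .empty⟩ ⟨∅, .empty⟩) (generateFrom_prod.ge _ hA)
  choose B hB T hT hBT using he
  let f : Ω → ℕ → Bool := fun ω n => decide (ω ∈ B n)
  have hf : Measurable f := measurable_pi_iff.2 fun n => by
    have hfB : (fun ω => f ω n) ⁻¹' {true} = B n := by ext; simp [f]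
    exact measurable_to_bool (hfB ▸ hB n)
  have hcomap : MeasurableSet[MeasurableSpace.comap (Prod.map f id) inferInstance] A := by
    refine MeasurableSpace.generateFrom_le ?_ _ hAe
    rintro _ ⟨n, rfl⟩
    refine ⟨{x | x n = true} ×ˢ T n,
      (measurableSet_eq_fun (measurable_pi_apply n) measurable_const).prod (hT n), ?_⟩
    rw [← hBT]
    ext ⟨ω, y⟩
    simp [f]
  obtain ⟨A', hA', rfl⟩ := hcomap
  rw [fst_image_preimage_prodMap_id]
  exact ((hA'.analyticSet_image measurable_fst).nullMeasurableSet _).preimage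
    (hf.measurePreserving P).quasiMeasurePreserving

section Debut

variable {Ω : Type*}

theorem setOf_debut_lt (A : Set (Ω × ℝ≥0)) (c : ℝ≥0∞) :
    {ω | debut A ω < c} = Prod.fst '' (A ∩ {p | (p.2 : ℝ≥0∞) < c}) := by
  ext ω
  simp [debut, iInf_lt_iff]

theorem setOf_debut_le_eq_iInter (A : Set (Ω × ℝ≥0)) {t : ℝ≥0} {c : ℕ → ℝ≥0}
    (htc : ∀ n, t < c n) (hc : Tendsto c atTop (𝓝 t)) :
    {ω | debut A ω ≤ t} = ⋂ n, {ω | debut A ω < c n} := by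
  ext ω
  simp only [mem_ofPred_eq, mem_iInter]
  refine ⟨fun h n => h.trans_lt (ENNReal.coe_lt_coe.2 (htc n)), fun h => ?_⟩
  exact ge_of_tendsto' (ENNReal.tendsto_coe.2 hc) fun n => (h n).le

theorem measurable_debut [MeasurableSpace Ω] (P : Measure Ω) [IsFiniteMeasure P] [P.IsComplete]
    {A : Set (Ω × ℝ≥0)} (hA : MeasurableSet A) : Measurable (debut A) := by
  refine measurable_of_Iio fun c => ?_
  change MeasurableSet {ω | debut A ω < c}
  rw [setOf_debut_lt]
  have hAc : MeasurableSet (A ∩ {p | (p.2 : ℝ≥0∞) < c}) :=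
    hA.inter (measurableSet_lt measurable_snd.coe_nnreal_ennreal measurable_const)
  exact (hAc.nullMeasurableSet_fst_image P).measurable_of_complete

theorem measurableSet_setOf_debut_le [mΩ : MeasurableSpace Ω] (P : Measure Ω)
    [IsFiniteMeasure P] {A : Set (Ω × ℝ≥0)} (ℱ : ℝ≥0 → MeasurableSpace Ω) (hmono : Monotone ℱ)
    (hle : ∀ t, ℱ t ≤ mΩ)
    (hnull : ∀ s : Set Ω, P s = 0 → MeasurableSet[ℱ 0] s)
    (hrc : ∀ t : ℝ≥0, ℱ t = ⨅ (u : ℝ≥0) (_ : t < u), ℱ u)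
    (hprog : ∀ t : ℝ≥0, MeasurableSet[(ℱ t).prod inferInstance] (A ∩ {p : Ω × ℝ≥0 | p.2 ≤ t}))
    (t : ℝ≥0) : MeasurableSet[ℱ t] {ω | debut A ω ≤ (t : ℝ≥0∞)} := by
  rw [hrc t]
  simp only [MeasurableSpace.measurableSet_iInf]
  intro u htu
  obtain ⟨c, -, hc_mem, hc_lim⟩ := exists_seq_strictAnti_tendsto' htu
  rw [setOf_debut_le_eq_iInter A (fun n => (hc_mem n).1) hc_lim]
  refine .iInter fun n => ?_
  have := P.isComplete_trim (hle u) fun s hs => hmono (zero_le : 0 ≤ u) _ (hnull s hs)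
  have hAc : A ∩ {p | (p.2 : ℝ≥0∞) < c n} = (A ∩ {p | p.2 ≤ u}) ∩ {p : Ω × ℝ≥0 | p.2 < c n} := by
    ext p
    simp only [mem_inter_iff, mem_ofPred_eq, ENNReal.coe_lt_coe]
    exact ⟨fun h => ⟨⟨h.1, h.2.le.trans (hc_mem n).2.le⟩, h.2⟩, fun h => ⟨h.1.1, h.2⟩⟩
  have hAc_meas : MeasurableSet[(ℱ u).prod inferInstance] (A ∩ {p | (p.2 : ℝ≥0∞) < c n}) := by
    rw [hAc]
    exact (hprog u).inter (measurable_snd measurableSet_Iio)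
  rw [setOf_debut_lt]
  exact (hAc_meas.nullMeasurableSet_fst_image (P.trim (hle u))).measurable_of_complete

end Debut

/-- **Measurability of the debut.** For a complete probability space `(Ω, F, P)` and a
product-measurable `A ⊆ Ω × ℝ⁺`: (i) `{D_A < ∞} = π_Ω(A)` and `D_A` is `F`-measurable;
(ii) if `(F_t)` is a filtration satisfying the usual conditions and `A` is progressively
measurable then `D_A` is a stopping time. -/
theorem debut_measurable
    {Ω : Type*} [mΩ : MeasurableSpace Ω]
    (P : Measure Ω) [IsProbabilityMeasure P] (hP : P.IsComplete)
    (A : Set (Ω × ℝ≥0)) (hA : MeasurableSet A) :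
    ({ω | debut A ω < ⊤} = Prod.fst '' A ∧ Measurable (debut A)) ∧
    (∀ ℱ : ℝ≥0 → MeasurableSpace Ω,
      Monotone ℱ →
      (∀ t, ℱ t ≤ mΩ) →
      -- usual conditions: F_0 contains all P-null sets, and right continuity
      (∀ s : Set Ω, P s = 0 → MeasurableSet[ℱ 0] s) →
      (∀ t : ℝ≥0, ℱ t = ⨅ (u : ℝ≥0) (_ : t < u), ℱ u) →
      -- A is progressively measurable
      (∀ t : ℝ≥0, MeasurableSet[(ℱ t).prod inferInstance]
        (A ∩ {p : Ω × ℝ≥0 | p.2 ≤ t})) →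
      -- D_A is a stopping time
      ∀ t : ℝ≥0, MeasurableSet[ℱ t] {ω | debut A ω ≤ (t : ℝ≥0∞)}) :=
  ⟨⟨by simpa using setOf_debut_lt A ⊤, measurable_debut P hA⟩,
    fun ℱ hmono hle hnull hrc hprog => measurableSet_setOf_debut_le P ℱ hmono hle hnull hrc hprog⟩
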